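/- arXiv:1606.00909 — 5 statements merged into one kernel-verified Lean document; each statement's English description precedes it below -/
import Mathlib

section
/- Hardy's Lemma: Let x₁, x₂ be nonnegative Lebesgue measurable functions on [0, γ) with 0 < γ ≤ ∞, such that ∫₀ᵗ x₁ ≤ ∫₀ᵗ x₂ for all t ∈ [0, γ). Then for any nonnegative decreasing (non-increasing) function y on [0, γ), we have ∫₀^γ x₁·y ≤ ∫₀^γ x₂·y. -/
open MeasureTheory Set ENNReal

/-! Both sides are integrals of `y` against the measures `x₁ dt` and `x₂ dt`. By the layer cake
formula it suffices to compare these measures on the superlevel sets of `y`, which are initial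
segments of `[0, γ)` because `y` is decreasing. Up to a single point such a segment is an
increasing union of intervals `[0, q)` with `q` rational, on which the comparison is the hypothesis. -/

theorem volume_setOf_ofReal_lt_inter_Ioi (c : ℝ≥0∞) :
    volume ({t : ℝ | ENNReal.ofReal t < c} ∩ Ioi 0) = c := by
  induction c using ENNReal.recTopCoe with
  | top => simp [Real.volume_Ioi]
  | coe r =>
    have : {t : ℝ | ENNReal.ofReal t < r} ∩ Ioi 0 = Ioo 0 (r : ℝ) := by
      ext t
      simp only [mem_inter_iff, mem_ofPred_eq, mem_Ioi, mem_Ioo, ← ENNReal.ofReal_coe_nnreal,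
        ENNReal.ofReal_lt_ofReal_iff']
      constructor
      · rintro ⟨⟨htr, -⟩, ht⟩
        exact ⟨ht, htr⟩
      · rintro ⟨ht, htr⟩
        exact ⟨⟨htr, ht.trans htr⟩, ht⟩
    simp [this, Real.volume_Ioo]

theorem lintegral_eq_lintegral_meas_ofReal_lt {α : Type*} [MeasurableSpace α] (μ : Measure α)
    [SFinite μ] {g : α → ℝ≥0∞} (hg : Measurable g) :
    ∫⁻ a, g a ∂μ = ∫⁻ t in Ioi 0, μ {a | ENNReal.ofReal t < g a} := by
  have hE : MeasurableSet {p : α × ℝ | ENNReal.ofReal p.2 < g p.1} :=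
    measurableSet_lt (by fun_prop) (by fun_prop)
  calc ∫⁻ a, g a ∂μ
      = ∫⁻ a, volume.restrict (Ioi 0) {t : ℝ | ENNReal.ofReal t < g a} ∂μ := by
        simp only [Measure.restrict_apply' measurableSet_Ioi,
          volume_setOf_ofReal_lt_inter_Ioi]
    _ = μ.prod (volume.restrict (Ioi 0)) {p : α × ℝ | ENNReal.ofReal p.2 < g p.1} :=
        (Measure.prod_apply hE).symm
    _ = ∫⁻ t in Ioi 0, μ {a | ENNReal.ofReal t < g a} := Measure.prod_apply_symm hE

theorem lintegral_le_lintegral_of_forall_meas_lt_le {α : Type*} [MeasurableSpace α]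
    {μ ν : Measure α} [SFinite μ] [SFinite ν] {g : α → ℝ≥0∞} (hg : Measurable g)
    (h : ∀ t, μ {a | t < g a} ≤ ν {a | t < g a}) :
    ∫⁻ a, g a ∂μ ≤ ∫⁻ a, g a ∂ν := by
  rw [lintegral_eq_lintegral_meas_ofReal_lt μ hg, lintegral_eq_lintegral_meas_ofReal_lt ν hg]
  exact lintegral_mono fun t => h _

theorem setOf_lt_indicator_subset {α : Type*} (A : Set α) {y : α → ℝ≥0∞} (t : ℝ≥0∞) :
    {s | t < A.indicator y s} ⊆ A := fun s hs =>
  support_indicator_subset (pos_of_gt (show t < A.indicator y s from hs)).ne'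

/-- An initial segment of `[0, ∞)`: one of `∅`, `[0, a)`, `[0, a]` or `[0, ∞)`. -/
def IsInitialSegment (A : Set ℝ) : Prop :=
  A ⊆ Ici 0 ∧ ∀ s ∈ A, Icc 0 s ⊆ A

namespace IsInitialSegment

variable {A : Set ℝ}

theorem ordConnected (hA : IsInitialSegment A) : A.OrdConnected :=
  ⟨fun _ ha _ hb _ hs => hA.2 _ hb ⟨(hA.1 ha).trans hs.1, hs.2⟩⟩

theorem measurableSet (hA : IsInitialSegment A) : MeasurableSet A :=
  hA.ordConnected.measurableSet

theorem setOf_lt_indicator {y : ℝ → ℝ≥0∞} (hA : IsInitialSegment A) (hy : AntitoneOn y A)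
    (t : ℝ≥0∞) : IsInitialSegment {s | t < A.indicator y s} := by
  have hsub := setOf_lt_indicator_subset (y := y) A t
  refine ⟨hsub.trans hA.1, fun s hs r hr => ?_⟩
  have hrA : r ∈ A := hA.2 s (hsub hs) hr
  have hys : t < y s := by simpa [indicator_of_mem (hsub hs)] using hs
  simpa [mem_ofPred_eq, indicator_of_mem hrA] using hys.trans_le (hy hrA (hsub hs) hr.2)

theorem measurable_indicator {y : ℝ → ℝ≥0∞} (hA : IsInitialSegment A) (hy : AntitoneOn y A) :
    Measurable (A.indicator y) :=
  measurable_of_Ioi fun t => (hA.setOf_lt_indicator hy t).measurableSet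

theorem measure_le (μ ν : Measure ℝ) [NullSingletonClass μ] (hA : IsInitialSegment A)
    (h : ∀ t ∈ A, μ (Ico 0 t) ≤ ν (Ico 0 t)) : μ A ≤ ν A := by
  set U := ⋃ q : {q : ℚ // (q : ℝ) ∈ A}, Ico (0 : ℝ) q
  have hU : ∀ a ∈ A, ∀ b ∈ A, a < b → a ∈ U := fun a ha b hb hab => by
    obtain ⟨q, haq, hqb⟩ := exists_rat_btwn hab
    exact mem_iUnion.2 ⟨⟨q, hA.2 b hb ⟨(hA.1 ha).trans haq.le, hqb.le⟩⟩, hA.1 ha, haq⟩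
  have hAU : (A \ U).Subsingleton := fun a ha b hb =>
    le_antisymm (not_lt.1 fun hba => hb.2 (hU b hb.1 a ha.1 hba))
      (not_lt.1 fun hab => ha.2 (hU a ha.1 b hb.1 hab))
  have hmono : Monotone fun q : {q : ℚ // (q : ℝ) ∈ A} => Ico (0 : ℝ) q :=
    fun q r hqr => Ico_subset_Ico_right (by exact_mod_cast hqr)
  calc μ A ≤ μ U := measure_mono_ae (ae_le_set.2 (hAU.measure_zero μ))
    _ = ⨆ q : {q : ℚ // (q : ℝ) ∈ A}, μ (Ico 0 q) := hmono.directed_le.measure_iUnion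
    _ ≤ ⨆ q : {q : ℚ // (q : ℝ) ∈ A}, ν (Ico 0 q) := iSup_mono fun q => h q q.2
    _ ≤ ν A := iSup_le fun q => measure_mono (Ico_subset_Icc_self.trans (hA.2 q q.2))

end IsInitialSegment

theorem hardy_lemma_general (γ : ℝ≥0∞)
    (x₁ x₂ y : ℝ → ℝ≥0∞)
    (hx₁ : Measurable x₁) (hx₂ : Measurable x₂)
    (hy : AntitoneOn y {s : ℝ | 0 ≤ s ∧ ENNReal.ofReal s < γ})
    (h : ∀ t : ℝ, 0 ≤ t → ENNReal.ofReal t < γ →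
      ∫⁻ s in Set.Ico (0:ℝ) t, x₁ s ≤ ∫⁻ s in Set.Ico (0:ℝ) t, x₂ s) :
    ∫⁻ s in {s : ℝ | 0 ≤ s ∧ ENNReal.ofReal s < γ}, x₁ s * y s
      ≤ ∫⁻ s in {s : ℝ | 0 ≤ s ∧ ENNReal.ofReal s < γ}, x₂ s * y s := by
  set D := {s : ℝ | 0 ≤ s ∧ ENNReal.ofReal s < γ}
  have hD : IsInitialSegment D := ⟨fun s hs => hs.1, fun s hs r hr =>
    ⟨hr.1, (ENNReal.ofReal_le_ofReal hr.2).trans_lt hs.2⟩⟩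
  have hyD : Measurable (D.indicator y) := hD.measurable_indicator hy
  have hdensity : ∀ x : ℝ → ℝ≥0∞, Measurable x →
      ∫⁻ s in D, x s * y s = ∫⁻ s, D.indicator y s ∂volume.withDensity x := fun x hx => by
    rw [lintegral_withDensity_eq_lintegral_mul _ hx hyD, ← lintegral_indicator hD.measurableSet]
    congr 1 with s
    by_cases hs : s ∈ D <;> simp [hs]
  rw [hdensity x₁ hx₁, hdensity x₂ hx₂]
  refine lintegral_le_lintegral_of_forall_meas_lt_le hyD fun t =>
    (hD.setOf_lt_indicator hy t).measure_le _ _ fun r hr => ?_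
  obtain ⟨hr₀, hrγ⟩ : r ∈ D := setOf_lt_indicator_subset D t hr
  simpa only [withDensity_apply _ measurableSet_Ico] using h r hr₀ hrγ

/-- Hardy's Lemma on [0, γ), 0 < γ ≤ ∞. Nonnegative measurable functions are modeled
as `ℝ≥0∞`-valued functions. -/
theorem hardy_lemma (γ : ℝ≥0∞) (hγ : 0 < γ)
    (x₁ x₂ y : ℝ → ℝ≥0∞)
    (hx₁ : Measurable x₁) (hx₂ : Measurable x₂)
    (hy : AntitoneOn y {s : ℝ | 0 ≤ s ∧ ENNReal.ofReal s < γ})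
    (h : ∀ t : ℝ, 0 ≤ t → ENNReal.ofReal t < γ →
      ∫⁻ s in Set.Ico (0:ℝ) t, x₁ s ≤ ∫⁻ s in Set.Ico (0:ℝ) t, x₂ s) :
    ∫⁻ s in {s : ℝ | 0 ≤ s ∧ ENNReal.ofReal s < γ}, x₁ s * y s
      ≤ ∫⁻ s in {s : ℝ | 0 ≤ s ∧ ENNReal.ofReal s < γ}, x₂ s * y s :=
  hardy_lemma_general γ x₁ x₂ y hx₁ hx₂ hy h
end

section
/- For any measurable function x on I = [0, γ), any nonnegative decreasing function y on I, and any measurable set A ⊆ I, the inequality ∫₀^γ (x·χ_A)* · y ≤ ∫₀^{m(A)} x* · y holds, where f* denotes the decreasing rearrangement of f and m is Lebesgue measure. -/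
open MeasureTheory Set ENNReal

/-!
Pointwise, `(x χ_A)* ≤ x*` because `|x χ_A| ≤ |x|`, and `(x χ_A)*` vanishes beyond the measure
of `A`, the support of `x χ_A`. Hence `(x χ_A)* y ≤ χ_{[0, m(A))} x* y` for every nonnegative `y`,
and integrating gives the inequality.
-/

/-- The interval `[0, γ)` for `0 < γ ≤ ∞`, as a subset of `ℝ`. -/
def Iset (γ : ℝ≥0∞) : Set ℝ := {s : ℝ | 0 ≤ s ∧ ENNReal.ofReal s < γ}

/-- The decreasing rearrangement of `f` with respect to the measure `μ`:
`f*(t) = inf {λ ≥ 0 : μ{s : |f s| > λ} ≤ t}`, valued in `[0,∞]`. -/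
noncomputable def decRearr (μ : Measure ℝ) (f : ℝ → ℝ) (t : ℝ) : ℝ≥0∞ :=
  sInf {l : ℝ≥0∞ | μ {s : ℝ | l < ENNReal.ofReal |f s|} ≤ ENNReal.ofReal t}

lemma measurableSet_Iset (γ : ℝ≥0∞) : MeasurableSet (Iset γ) :=
  measurableSet_Ici.inter (measurableSet_Iio.preimage ENNReal.measurable_ofReal)

lemma Iset_mono {a b : ℝ≥0∞} (h : a ≤ b) : Iset a ⊆ Iset b :=
  fun _ hs => ⟨hs.1, hs.2.trans_le h⟩

lemma decRearr_mono_of_abs_le {μ : Measure ℝ} {f g : ℝ → ℝ} (hfg : ∀ s, |f s| ≤ |g s|) (t : ℝ) :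
    decRearr μ f t ≤ decRearr μ g t :=
  sInf_le_sInf fun _ hl => (measure_mono fun _ hs =>
    lt_of_lt_of_le hs (ENNReal.ofReal_le_ofReal (hfg _))).trans hl

lemma decRearr_eq_zero_of_measure_support_le {μ : Measure ℝ} {f : ℝ → ℝ} {t : ℝ}
    (h : μ (Function.support f) ≤ ENNReal.ofReal t) : decRearr μ f t = 0 := by
  refine nonpos_iff_eq_zero.mp (sInf_le ((measure_mono fun s hs => ?_).trans h))
  simpa [Function.mem_support] using hs

lemma decRearr_indicator_le_indicator {μ : Measure ℝ} (f : ℝ → ℝ) (A : Set ℝ) {t : ℝ}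
    (ht : 0 ≤ t) : decRearr μ (A.indicator f) t ≤ (Iset (μ A)).indicator (decRearr μ f) t := by
  by_cases htA : t ∈ Iset (μ A)
  · rw [indicator_of_mem htA]
    exact decRearr_mono_of_abs_le (norm_indicator_le_norm_self f) t
  · rw [indicator_of_notMem htA]
    have hA : μ A ≤ ENNReal.ofReal t := not_lt.mp fun h => htA ⟨ht, h⟩
    exact (decRearr_eq_zero_of_measure_support_le
      ((measure_mono support_indicator_subset).trans hA)).le

theorem rearr_indicator_integral_le_general (γ : ℝ≥0∞) (x : ℝ → ℝ) (y : ℝ → ℝ≥0∞) (A : Set ℝ) :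
    ∫⁻ t in Iset γ, decRearr (volume.restrict (Iset γ)) (A.indicator x) t * y t
      ≤ ∫⁻ t in Iset (volume A), decRearr (volume.restrict (Iset γ)) x t * y t := by
  set μ := volume.restrict (Iset γ)
  have hμA : μ A ≤ volume A := Measure.restrict_apply_le _ _
  calc ∫⁻ t in Iset γ, decRearr μ (A.indicator x) t * y t
      ≤ ∫⁻ t in Iset γ, (Iset (μ A)).indicator (fun t => decRearr μ x t * y t) t :=
        setLIntegral_mono' (measurableSet_Iset γ) fun t ht => by
          rw [indicator_mul_left]
          exact mul_le_mul_left (decRearr_indicator_le_indicator x A ht.1) (y t)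
    _ = ∫⁻ t in Iset (μ A) ∩ Iset γ, decRearr μ x t * y t := by
        rw [lintegral_indicator (measurableSet_Iset _),
          Measure.restrict_restrict (measurableSet_Iset _)]
    _ ≤ ∫⁻ t in Iset (volume A), decRearr μ x t * y t :=
        lintegral_mono_set (inter_subset_left.trans (Iset_mono hμA))

/-- For measurable `x` on `I = [0,γ)`, a nonnegative decreasing `y` on `I`, and a
measurable `A ⊆ I`, we have `∫₀^γ (x χ_A)* y ≤ ∫₀^{m(A)} x* y`. -/
theorem rearr_indicator_integral_le (γ : ℝ≥0∞) (hγ : 0 < γ)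
    (x : ℝ → ℝ) (hx : Measurable x)
    (y : ℝ → ℝ≥0∞) (hy : AntitoneOn y (Iset γ))
    (A : Set ℝ) (hA : MeasurableSet A) (hAI : A ⊆ Iset γ) :
    ∫⁻ t in Iset γ, decRearr (volume.restrict (Iset γ)) (A.indicator x) t * y t
      ≤ ∫⁻ t in Iset (volume A), decRearr (volume.restrict (Iset γ)) x t * y t :=
  rearr_indicator_integral_le_general γ x y A
end

section
/- Let φ be an Orlicz function with φ(tₙ) → 0 along a sequence tₙ → 0, and let w be a positive decreasing weight sequence with w(1) ≤ 1 and W(∞) = ∑ w(k) = ∞. Then there exist a subsequence (n_j) and natural numbers (m_j) with m_j ≥ j+1 such that 1/2ʲ ≤ φ(t_{n_j})·W(m_j) ≤ 1/2^{j−2} for all j, where W(m) = ∑_{k=1}^m w(k). -/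
open Filter Finset

/-!
Pass to a subsequence along which `ε_j := φ(t_{n_j})` satisfies `ε_j W(j) < 2^{-j}` and
`ε_j ≤ 2^{-j}`. Since `W → ∞` and its increments `w(k)` are at most `1`, the sequence
`m ↦ ε_j W(m)` tends to infinity in steps of at most `ε_j`; its first value above `2^{-j}` after
index `j` is therefore at most `2^{-j} + ε_j ≤ 2^{2-j}`.
-/

theorem exists_gt_mem_Icc_of_tendsto_atTop {α : Type*} [AddCommMonoid α] [LinearOrder α]
    [IsOrderedCancelAddMonoid α] {a : ℕ → α} {c d : α} (ha : Tendsto a atTop atTop)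
    (hstep : ∀ m, a (m + 1) ≤ a m + d) {N : ℕ} (hN : a N < c) :
    ∃ m, N < m ∧ c ≤ a m ∧ a m ≤ c + d := by
  classical
  have hex : ∃ m, N < m ∧ c ≤ a m :=
    ((eventually_gt_atTop N).and (ha.eventually_ge_atTop c)).exists
  obtain ⟨hNm, hcm⟩ := Nat.find_spec hex
  obtain ⟨m, hm⟩ : ∃ m, Nat.find hex = m + 1 := Nat.exists_eq_add_one.2 (by omega)
  have hprev : a m < c := by
    rcases (Nat.lt_succ_iff.1 (hm ▸ hNm)).eq_or_lt with rfl | hNm'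
    · exact hN
    · exact not_le.1 fun h => Nat.find_min hex (by omega) ⟨hNm', h⟩
  exact ⟨m + 1, hm ▸ hNm, hm ▸ hcm, (hstep m).trans (add_le_add_left hprev.le d)⟩

theorem exists_gt_le_mul_sum_range_le {w : ℕ → ℝ} (hw0 : ∀ k, 0 ≤ w k) (hw1 : ∀ k, w k ≤ 1)
    (hw : ¬Summable w) {ε c : ℝ} (hε : 0 < ε) {N : ℕ} (hN : ε * ∑ k ∈ range N, w k < c) :
    ∃ m, N < m ∧ c ≤ ε * ∑ k ∈ range m, w k ∧ ε * ∑ k ∈ range m, w k ≤ c + ε := by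
  refine exists_gt_mem_Icc_of_tendsto_atTop
    (((not_summable_iff_tendsto_nat_atTop_of_nonneg hw0).1 hw).const_mul_atTop hε) (fun m => ?_) hN
  rw [sum_range_succ, mul_add]
  gcongr
  exact mul_le_of_le_one_right hε.le (hw1 m)

theorem two_zpow_neg_add_two_zpow_neg_le (j : ℤ) :
    (2:ℝ) ^ (-j) + 2 ^ (-j) ≤ 2 ^ (2 - j) := by
  rw [sub_eq_neg_add, zpow_add₀ two_ne_zero, show (2:ℝ) ^ (2:ℤ) = 4 by norm_num]
  linarith [zpow_pos (two_pos (α := ℝ)) (-j)]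

theorem exists_subseq_weight_bounds_general (φ : ℝ → ℝ)
    (hpos : ∀ u : ℝ, 0 < u → 0 < φ u)
    (t : ℕ → ℝ) (htpos : ∀ n, 0 < t n)
    (hφt0 : Tendsto (fun n => φ (t n)) atTop (nhds 0))
    (w : ℕ → ℝ) (hwpos : ∀ k, 0 < w k) (hwdec : Antitone w) (hw1 : w 0 ≤ 1)
    (hWinf : ¬ Summable w) :
    ∃ n : ℕ → ℕ, StrictMono n ∧ ∃ m : ℕ → ℕ, ∀ j : ℕ, 1 ≤ j →
      j + 1 ≤ m j ∧
      (2:ℝ) ^ (-(j:ℤ)) ≤ φ (t (n j)) * ∑ k ∈ Finset.range (m j), w k ∧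
      φ (t (n j)) * ∑ k ∈ Finset.range (m j), w k ≤ (2:ℝ) ^ (2 - (j:ℤ)) := by
  have hsmall (j : ℕ) : ∀ᶠ k in atTop, φ (t k) * ∑ i ∈ range j, w i < (2:ℝ) ^ (-(j:ℤ)) ∧
      φ (t k) ≤ (2:ℝ) ^ (-(j:ℤ)) := by
    have hpow := zpow_pos (two_pos (α := ℝ)) (-(j:ℤ))
    have hprod := hφt0.mul_const (∑ i ∈ range j, w i)
    rw [zero_mul] at hprod
    exact (hprod.eventually (gt_mem_nhds hpow)).and (hφt0.eventually (ge_mem_nhds hpow))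
  obtain ⟨n, hn, hsmall⟩ := extraction_forall_of_eventually hsmall
  have hw_le_one (k : ℕ) : w k ≤ 1 := (hwdec k.zero_le).trans hw1
  choose m hjm hlower hupper using fun j => exists_gt_le_mul_sum_range_le
    (fun k => (hwpos k).le) hw_le_one hWinf (hpos _ (htpos (n j))) (hsmall j).1
  refine ⟨n, hn, m, fun j _ => ⟨hjm j, hlower j, ?_⟩⟩
  calc φ (t (n j)) * ∑ k ∈ range (m j), w k ≤ (2:ℝ) ^ (-(j:ℤ)) + φ (t (n j)) := hupper j
    _ ≤ (2:ℝ) ^ (-(j:ℤ)) + 2 ^ (-(j:ℤ)) := by gcongr; exact (hsmall j).2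
    _ ≤ (2:ℝ) ^ (2 - (j:ℤ)) := two_zpow_neg_add_two_zpow_neg_le j

/-- If `φ(tₙ) → 0` along `tₙ → 0` and `w` is a positive decreasing weight sequence with
first term `≤ 1` and divergent sum, then there are a subsequence `(n_j)` and sizes
`(m_j)` with `m_j ≥ j+1` and `1/2ʲ ≤ φ(t_{n_j}) W(m_j) ≤ 1/2^{j-2}` for all `j ≥ 1`. -/
theorem exists_subseq_weight_bounds (φ : ℝ → ℝ)
    (hconv : ConvexOn ℝ (Set.Ici 0) φ) (h0 : φ 0 = 0)
    (hpos : ∀ u : ℝ, 0 < u → 0 < φ u)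
    (t : ℕ → ℝ) (htpos : ∀ n, 0 < t n)
    (ht0 : Tendsto t atTop (nhds 0))
    (hφt0 : Tendsto (fun n => φ (t n)) atTop (nhds 0))
    (w : ℕ → ℝ) (hwpos : ∀ k, 0 < w k) (hwdec : Antitone w) (hw1 : w 0 ≤ 1)
    (hWinf : ¬ Summable w) :
    ∃ n : ℕ → ℕ, StrictMono n ∧ ∃ m : ℕ → ℕ, ∀ j : ℕ, 1 ≤ j →
      j + 1 ≤ m j ∧
      (2:ℝ) ^ (-(j:ℤ)) ≤ φ (t (n j)) * ∑ k ∈ Finset.range (m j), w k ∧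
      φ (t (n j)) * ∑ k ∈ Finset.range (m j), w k ≤ (2:ℝ) ^ (2 - (j:ℤ)) :=
  exists_subseq_weight_bounds_general φ hpos t htpos hφt0 w hwpos hwdec hw1 hWinf
end

section
/- Let φ be an Orlicz function, w a decreasing weight on I = [0,γ), and ρ(x) = ∫₀^γ φ(x*)·w the Orlicz-Lorentz modular. Then ρ is orthogonally subadditive: if x, y are measurable with |x| ∧ |y| = 0 (disjoint supports), then ρ(x + y) ≤ ρ(x) + ρ(y). -/
/-!
Let `ν` be the measure `w(t) dt` on `[0, γ)`. The layer-cake formula gives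
`ρ(x) = ∫₀^∞ ν {t | φ(x*(t)) > l} dl`. Since `φ` is an increasing continuous bijection of
`[0, ∞)`, the level set `{φ(x*) > φ(v)}` is the interval `[0, d_x(v))`, where
`d_x(v) = |{|x| > v}|` is the distribution function of `x`. Disjointness of the supports gives
`d_{x+y} ≤ d_x + d_y`, and `W(a) = ν [0, a)` is subadditive because `w` is decreasing: the
integral of `w` over `[a, a + b)` is at most its integral over `[0, b)`. Integrating
`W(d_{x+y}(v)) ≤ W(d_x(v)) + W(d_y(v))` over the levels gives the inequality.
-/

open MeasureTheory Set ENNReal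

/-- Extension of `φ : ℝ → ℝ` to `[0,∞]`, sending `∞` to `∞`. -/
noncomputable def phie (φ : ℝ → ℝ) (a : ℝ≥0∞) : ℝ≥0∞ :=
  if a = ∞ then ∞ else ENNReal.ofReal (φ a.toReal)

/-- The Orlicz-Lorentz modular `ρ(x) = ∫₀^γ φ(x*) w`. -/
noncomputable def olModular (γ : ℝ≥0∞) (φ w : ℝ → ℝ) (x : ℝ → ℝ) : ℝ≥0∞ :=
  ∫⁻ t in Iset γ, phie φ (decRearr (volume.restrict (Iset γ)) x t) * ENNReal.ofReal (w t)

namespace OrliczLorentz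

theorem Iset_eq_Ico {c : ℝ≥0∞} (hc : c ≠ ∞) : Iset c = Ico 0 c.toReal := by
  ext s
  exact and_congr_right fun hs => ofReal_lt_iff_lt_toReal hs hc

theorem Iset_mono {a b : ℝ≥0∞} (h : a ≤ b) : Iset a ⊆ Iset b :=
  fun _ hs => ⟨hs.1, hs.2.trans_le h⟩

theorem measurableSet_Iset (c : ℝ≥0∞) : MeasurableSet (Iset c) :=
  measurableSet_Ici.inter (measurableSet_lt measurable_ofReal measurable_const)

theorem volume_Iset (c : ℝ≥0∞) : volume (Iset c) = c := by
  rcases eq_or_ne c ∞ with rfl | hc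
  · have : Iset ∞ = Ici 0 := by ext s; simp [Iset, ofReal_lt_top]
    simp [this]
  · rw [Iset_eq_Ico hc, Real.volume_Ico, sub_zero, ofReal_toReal hc]

theorem volume_restrict_Ioi_ofReal_lt (c : ℝ≥0∞) :
    volume.restrict (Ioi 0) {l : ℝ | ENNReal.ofReal l < c} = c := by
  rcases eq_or_ne c ∞ with rfl | hc
  · simp [ENNReal.ofReal_lt_top]
  · have : {l : ℝ | ENNReal.ofReal l < c} ∩ Ioi 0 = Ioo 0 c.toReal := by
      ext l
      simp only [mem_inter_iff, mem_ofPred_eq, mem_Ioi, mem_Ioo]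
      exact ⟨fun h => ⟨h.2, (ofReal_lt_iff_lt_toReal h.2.le hc).1 h.1⟩,
        fun h => ⟨(ofReal_lt_iff_lt_toReal h.1.le hc).2 h.2, h.1⟩⟩
    rw [Measure.restrict_apply (measurableSet_lt measurable_ofReal measurable_const), this,
      Real.volume_Ioo, sub_zero, ofReal_toReal hc]

theorem lintegral_eq_lintegral_meas_ofReal_lt {α : Type*} [MeasurableSpace α] (ν : Measure α)
    [SFinite ν] {F : α → ℝ≥0∞} (hF : Measurable F) :
    ∫⁻ a, F a ∂ν = ∫⁻ l in Ioi 0, ν {a | ENNReal.ofReal l < F a} := by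
  have hS : MeasurableSet {p : α × ℝ | ENNReal.ofReal p.2 < F p.1} :=
    measurableSet_lt (measurable_ofReal.comp measurable_snd) (hF.comp measurable_fst)
  calc ∫⁻ a, F a ∂ν
      = ∫⁻ a, volume.restrict (Ioi 0) {l : ℝ | ENNReal.ofReal l < F a} ∂ν := by
        simp only [volume_restrict_Ioi_ofReal_lt]
    _ = ν.prod (volume.restrict (Ioi 0)) {p : α × ℝ | ENNReal.ofReal p.2 < F p.1} :=
        (Measure.prod_apply hS).symm
    _ = ∫⁻ l in Ioi 0, ν {a | ENNReal.ofReal l < F a} := Measure.prod_apply_symm hS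

theorem lintegral_Ico_add_le {f : ℝ → ℝ≥0∞} {a b : ℝ} (ha : 0 ≤ a) (hb : 0 ≤ b)
    (hf : AntitoneOn f (Ico 0 (a + b))) :
    ∫⁻ t in Ico 0 (a + b), f t ≤ (∫⁻ t in Ico 0 a, f t) + ∫⁻ t in Ico 0 b, f t := by
  have htranslate : ∫⁻ t in Ico a (a + b), f t = ∫⁻ s in Ico 0 b, f (a + s) := by
    rw [(measurePreserving_add_left volume a).setLIntegral_comp_emb
      (measurableEmbedding_addLeft a), image_const_add_Ico, add_zero]
  have hshift : ∫⁻ s in Ico 0 b, f (a + s) ≤ ∫⁻ s in Ico 0 b, f s :=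
    setLIntegral_mono' measurableSet_Ico fun s hs =>
      hf ⟨hs.1, by linarith [hs.2]⟩ ⟨by linarith [hs.1], by linarith [hs.2]⟩ (by linarith)
  calc ∫⁻ t in Ico 0 (a + b), f t
      = (∫⁻ t in Ico 0 a, f t) + ∫⁻ t in Ico a (a + b), f t := by
        rw [← Ico_union_Ico_eq_Ico ha (by linarith), lintegral_union measurableSet_Ico
          Ico_disjoint_Ico_same]
    _ ≤ (∫⁻ t in Ico 0 a, f t) + ∫⁻ t in Ico 0 b, f t := by
        rw [htranslate]; gcongr

noncomputable def distribution (μ : Measure ℝ) (f : ℝ → ℝ) (c : ℝ≥0∞) : ℝ≥0∞ :=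
  μ {s | c < ENNReal.ofReal |f s|}

section Rearrangement

variable {μ : Measure ℝ} {f : ℝ → ℝ}

theorem distribution_antitone : Antitone (distribution μ f) :=
  fun _ _ h => measure_mono fun _ hs => h.trans_lt hs

theorem distribution_eq_iSup (c : ℝ≥0∞) :
    distribution μ f c = ⨆ n : ℕ, distribution μ f (c + (n : ℝ≥0∞)⁻¹) := by
  have hmono : Monotone fun n : ℕ => {s | c + (n : ℝ≥0∞)⁻¹ < ENNReal.ofReal |f s|} :=
    fun _ _ h _ hs => lt_of_le_of_lt (add_le_add_right (by gcongr) c) hs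
  simp only [distribution]
  rw [← hmono.measure_iUnion]
  congr 1
  ext s
  simp only [mem_ofPred_eq, mem_iUnion]
  refine ⟨fun hs => ?_, fun ⟨n, hn⟩ => le_self_add.trans_lt hn⟩
  obtain ⟨n, hn⟩ := exists_inv_nat_lt (tsub_pos_iff_lt.2 hs).ne'
  exact ⟨n, lt_tsub_iff_left.1 hn⟩

theorem distribution_top : distribution μ f ∞ = 0 := by
  simp [distribution]

theorem decRearr_eq_sInf (t : ℝ) :
    decRearr μ f t = sInf {c | distribution μ f c ≤ ENNReal.ofReal t} := rfl

theorem lt_decRearr_iff {t : ℝ} {c : ℝ≥0∞} :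
    c < decRearr μ f t ↔ ENNReal.ofReal t < distribution μ f c := by
  rw [decRearr_eq_sInf]
  refine ⟨fun h => not_le.1 fun hc => ?_, fun h => ?_⟩
  · exact (sInf_le (show c ∈ {c | distribution μ f c ≤ ENNReal.ofReal t} from hc)).not_gt h
  have hc : c ≠ ∞ := by rintro rfl; simp [distribution_top] at h
  obtain ⟨n, hn⟩ := lt_iSup_iff.1 ((distribution_eq_iSup c).subst h)
  refine (ENNReal.lt_add_right hc (ENNReal.inv_ne_zero.2 (natCast_ne_top n))).trans_le
    (le_sInf fun m hm => ?_)
  by_contra! hmn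
  exact (hn.trans_le (distribution_antitone hmn.le)).not_ge hm

theorem Ici_inter_lt_decRearr (c : ℝ≥0∞) :
    Ici 0 ∩ {t | c < decRearr μ f t} = Iset (distribution μ f c) := by
  ext t
  exact and_congr_right fun _ => lt_decRearr_iff

theorem antitone_decRearr : Antitone (decRearr μ f) :=
  fun _ _ h => sInf_le_sInf fun _ hc => hc.trans (ofReal_le_ofReal h)

theorem distribution_add_le_of_min_abs_eq_zero {g : ℝ → ℝ} (hfg : ∀ s, min |f s| |g s| = 0)
    (c : ℝ≥0∞) :
    distribution μ (fun s => f s + g s) c ≤ distribution μ f c + distribution μ g c := by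
  refine (measure_mono fun s hs => ?_).trans (measure_union_le _ _)
  rcases min_eq_iff.1 (hfg s) with ⟨hf, -⟩ | ⟨hg, -⟩
  · right; simpa [abs_eq_zero.1 hf] using hs
  · left; simpa [abs_eq_zero.1 hg] using hs

end Rearrangement

section OrliczFunction

variable {φ : ℝ → ℝ}

theorem strictMonoOn_of_convexOn (hconv : ConvexOn ℝ (Ici 0) φ) (h0 : φ 0 = 0)
    (hpos : ∀ u, 0 < u → 0 < φ u) : StrictMonoOn φ (Ici 0) := by
  intro u hu v hv huv
  rcases (mem_Ici.1 hu).eq_or_lt with rfl | hu0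
  · rw [h0]; exact hpos v huv
  · exact hconv.strictMonoOn self_mem_Ici hu0 (by rw [h0]; exact hpos u hu0) ⟨hu, self_mem_Ici⟩
      ⟨hv, huv.le⟩ huv

theorem div_le_div_of_convexOn (hconv : ConvexOn ℝ (Ici 0) φ) (h0 : φ 0 = 0) {s t : ℝ}
    (hs : 0 < s) (hst : s ≤ t) : φ s / s ≤ φ t / t := by
  simpa [h0] using hconv.secant_mono self_mem_Ici hs.le (hs.trans_le hst).le hs.ne'
    (hs.trans_le hst).ne' hst

theorem exists_eq_of_convexOn (hconv : ConvexOn ℝ (Ici 0) φ) (h0 : φ 0 = 0)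
    (hpos : ∀ u, 0 < u → 0 < φ u) {l : ℝ} (hl : 0 < l) : ∃ v, 0 ≤ v ∧ φ v = l := by
  have hφ1 : 0 < φ 1 := hpos 1 one_pos
  set a := min 1 (l / φ 1)
  set b := max 1 (l / φ 1)
  have ha : 0 < a := lt_min one_pos (by positivity)
  have hab : a ≤ b := (min_le_left _ _).trans (le_max_left _ _)
  have hφa : φ a ≤ l := by
    have := div_le_div_of_convexOn hconv h0 ha (min_le_left 1 _)
    rw [div_one, div_le_iff₀ ha] at this
    calc φ a ≤ φ 1 * a := this
      _ ≤ φ 1 * (l / φ 1) := by gcongr; exact min_le_right _ _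
      _ = l := by field_simp
  have hφb : l ≤ φ b := by
    have := div_le_div_of_convexOn hconv h0 one_pos (le_max_left 1 (l / φ 1))
    rw [div_one, le_div_iff₀ (one_pos.trans_le (le_max_left _ _))] at this
    calc l = φ 1 * (l / φ 1) := by field_simp
      _ ≤ φ 1 * b := by gcongr; exact le_max_right _ _
      _ ≤ φ b := this
  have hcont : ContinuousOn φ (Icc a b) := by
    refine hconv.continuousOn_interior.mono fun z hz => ?_
    rw [interior_Ici]
    exact ha.trans_le hz.1
  obtain ⟨v, hv, hφv⟩ := intermediate_value_Icc hab hcont ⟨hφa, hφb⟩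
  exact ⟨v, ha.le.trans hv.1, hφv⟩

theorem monotone_phie (hφ : MonotoneOn φ (Ici 0)) : Monotone (phie φ) := by
  intro a b hab
  rcases eq_or_ne b ∞ with rfl | hb
  · simp [phie]
  rw [phie, if_neg (ne_top_of_le_ne_top hb hab), phie, if_neg hb]
  exact ofReal_le_ofReal (hφ toReal_nonneg toReal_nonneg (toReal_mono hb hab))

theorem ofReal_lt_phie_iff (hφ : StrictMonoOn φ (Ici 0)) (h0 : φ 0 = 0) {v : ℝ} (hv : 0 ≤ v)
    (a : ℝ≥0∞) : ENNReal.ofReal (φ v) < phie φ a ↔ ENNReal.ofReal v < a := by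
  rcases eq_or_ne a ∞ with rfl | ha
  · simp [phie, ofReal_lt_top]
  have hφv : 0 ≤ φ v := h0 ▸ hφ.monotoneOn self_mem_Ici hv hv
  rw [phie, if_neg ha, ofReal_lt_ofReal_iff_of_nonneg hφv, ofReal_lt_iff_lt_toReal hv ha]
  exact hφ.lt_iff_lt hv toReal_nonneg

end OrliczFunction

section Weight

variable {γ : ℝ≥0∞} {w : ℝ → ℝ}

noncomputable def weightMeasure (γ : ℝ≥0∞) (w : ℝ → ℝ) : Measure ℝ :=
  (volume.restrict (Iset γ)).withDensity fun t => ENNReal.ofReal (w t)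

instance : SFinite (weightMeasure γ w) := by
  unfold weightMeasure; infer_instance

theorem weightMeasure_apply (S : Set ℝ) :
    weightMeasure γ w S = ∫⁻ t in S ∩ Iset γ, ENNReal.ofReal (w t) := by
  rw [weightMeasure, withDensity_apply', Measure.restrict_restrict' (measurableSet_Iset γ)]

theorem weightMeasure_Ici_inter (S : Set ℝ) :
    weightMeasure γ w (Ici 0 ∩ S) = weightMeasure γ w S := by
  rw [weightMeasure_apply, weightMeasure_apply, inter_comm (Ici 0), inter_assoc,
    inter_eq_right (s := Ici 0).2 fun _ ht => ht.1]

theorem weightMeasure_Iset_add_le (hw : AntitoneOn w (Iset γ)) {a b : ℝ≥0∞}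
    (hab : a + b ≤ γ) :
    weightMeasure γ w (Iset (a + b))
      ≤ weightMeasure γ w (Iset a) + weightMeasure γ w (Iset b) := by
  rcases eq_or_ne a ∞ with rfl | ha
  · rw [top_add]; exact le_self_add
  rcases eq_or_ne b ∞ with rfl | hb
  · rw [add_top]; exact le_add_self
  have hinter : ∀ c ≤ γ, Iset c ∩ Iset γ = Iset c :=
    fun _ hc => inter_eq_left.2 (Iset_mono hc)
  have hsub : Ico 0 (a.toReal + b.toReal) ⊆ Iset γ := by
    rw [← toReal_add ha hb, ← Iset_eq_Ico (add_ne_top.2 ⟨ha, hb⟩)]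
    exact Iset_mono hab
  rw [weightMeasure_apply, weightMeasure_apply, weightMeasure_apply, hinter _ hab,
    hinter a (le_self_add.trans hab), hinter b (le_add_self.trans hab),
    Iset_eq_Ico (add_ne_top.2 ⟨ha, hb⟩), Iset_eq_Ico ha, Iset_eq_Ico hb, toReal_add ha hb]
  exact lintegral_Ico_add_le toReal_nonneg toReal_nonneg
    fun s hs t ht hst => ofReal_le_ofReal (hw (hsub hs) (hsub ht) hst)

theorem weightMeasure_Iset_le_add (hw : AntitoneOn w (Iset γ)) {a b c : ℝ≥0∞}
    (hcγ : c ≤ γ) (hc : c ≤ a + b) :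
    weightMeasure γ w (Iset c) ≤ weightMeasure γ w (Iset a) + weightMeasure γ w (Iset b) := by
  rcases le_or_gt c a with hca | hac
  · exact (measure_mono (Iset_mono hca)).trans le_self_add
  have hsplit : a + (c - a) = c := add_tsub_cancel_of_le hac.le
  calc weightMeasure γ w (Iset c)
      = weightMeasure γ w (Iset (a + (c - a))) := by rw [hsplit]
    _ ≤ weightMeasure γ w (Iset a) + weightMeasure γ w (Iset (c - a)) :=
        weightMeasure_Iset_add_le hw (hsplit.symm ▸ hcγ)
    _ ≤ weightMeasure γ w (Iset a) + weightMeasure γ w (Iset b) := by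
        gcongr
        exact Iset_mono (tsub_le_iff_left.2 hc)

theorem distribution_restrict_Iset_le (f : ℝ → ℝ) (c : ℝ≥0∞) :
    distribution (volume.restrict (Iset γ)) f c ≤ γ :=
  (measure_mono (subset_univ _)).trans_eq (by rw [Measure.restrict_apply_univ, volume_Iset])

theorem olModular_eq_lintegral_weightMeasure (hw : AntitoneOn w (Iset γ)) (φ f : ℝ → ℝ) :
    olModular γ φ w f
      = ∫⁻ t, phie φ (decRearr (volume.restrict (Iset γ)) f t) ∂weightMeasure γ w := by
  have hw_meas : AEMeasurable (fun t => ENNReal.ofReal (w t)) (volume.restrict (Iset γ)) :=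
    (aemeasurable_restrict_of_antitoneOn (measurableSet_Iset γ) hw).ennreal_ofReal
  rw [weightMeasure, lintegral_withDensity_eq_lintegral_mul_non_measurable₀ _ hw_meas
    (ae_of_all _ fun _ => ofReal_lt_top), olModular]
  simp only [Pi.mul_apply, mul_comm]

theorem olModular_eq_lintegral_weightMeasure_lt {φ : ℝ → ℝ} (hφ : MonotoneOn φ (Ici 0))
    (hw : AntitoneOn w (Iset γ)) (f : ℝ → ℝ) :
    olModular γ φ w f = ∫⁻ l in Ioi 0, weightMeasure γ w
      {t | ENNReal.ofReal l < phie φ (decRearr (volume.restrict (Iset γ)) f t)} := by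
  rw [olModular_eq_lintegral_weightMeasure hw]
  exact lintegral_eq_lintegral_meas_ofReal_lt _
    ((monotone_phie hφ).comp_antitone antitone_decRearr).measurable

theorem weightMeasure_ofReal_lt_phie {φ : ℝ → ℝ} (hφ : StrictMonoOn φ (Ici 0))
    (h0 : φ 0 = 0) {v : ℝ} (hv : 0 ≤ v) (f : ℝ → ℝ) :
    weightMeasure γ w
        {t | ENNReal.ofReal (φ v) < phie φ (decRearr (volume.restrict (Iset γ)) f t)}
      = weightMeasure γ w
          (Iset (distribution (volume.restrict (Iset γ)) f (ENNReal.ofReal v))) := by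
  simp only [ofReal_lt_phie_iff hφ h0 hv, ← Ici_inter_lt_decRearr, weightMeasure_Ici_inter]

end Weight

end OrliczLorentz

theorem olModular_orthogonally_subadditive_general (γ : ℝ≥0∞)
    (φ : ℝ → ℝ) (hconv : ConvexOn ℝ (Set.Ici 0) φ) (h0 : φ 0 = 0)
    (hpos : ∀ u : ℝ, 0 < u → 0 < φ u)
    (w : ℝ → ℝ) (hwdec : AntitoneOn w (Iset γ))
    (x y : ℝ → ℝ)
    (hdisj : ∀ s : ℝ, min |x s| |y s| = 0) :
    olModular γ φ w (fun s => x s + y s)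
      ≤ olModular γ φ w x + olModular γ φ w y := by
  open OrliczLorentz in
  have hφ := strictMonoOn_of_convexOn hconv h0 hpos
  have hlevel_anti : ∀ F : ℝ → ℝ≥0∞,
      Antitone fun l : ℝ => weightMeasure γ w {t | ENNReal.ofReal l < F t} :=
    fun _ _ _ h => measure_mono fun _ ht => (ofReal_le_ofReal h).trans_lt ht
  simp only [olModular_eq_lintegral_weightMeasure_lt hφ.monotoneOn hwdec]
  rw [← lintegral_add_left' (hlevel_anti _).measurable.aemeasurable]
  refine setLIntegral_mono' measurableSet_Ioi fun l hl => ?_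
  obtain ⟨v, hv, rfl⟩ := exists_eq_of_convexOn hconv h0 hpos hl
  simp only [weightMeasure_ofReal_lt_phie hφ h0 hv]
  exact weightMeasure_Iset_le_add hwdec (distribution_restrict_Iset_le _ _)
    (distribution_add_le_of_min_abs_eq_zero hdisj _)

/-- The Orlicz-Lorentz modular is orthogonally subadditive: for disjointly supported
`x, y` we have `ρ(x+y) ≤ ρ(x) + ρ(y)`. -/
theorem olModular_orthogonally_subadditive (γ : ℝ≥0∞) (hγ : 0 < γ)
    (φ : ℝ → ℝ) (hconv : ConvexOn ℝ (Set.Ici 0) φ) (h0 : φ 0 = 0)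
    (hpos : ∀ u : ℝ, 0 < u → 0 < φ u)
    (w : ℝ → ℝ) (hw : ∀ s ∈ Iset γ, 0 < w s) (hwdec : AntitoneOn w (Iset γ))
    (hwloc : ∀ b : ℝ, 0 ≤ b → ENNReal.ofReal b < γ → IntegrableOn w (Set.Ico 0 b))
    (x y : ℝ → ℝ) (hx : Measurable x) (hy : Measurable y)
    (hdisj : ∀ s : ℝ, min |x s| |y s| = 0) :
    olModular γ φ w (fun s => x s + y s)
      ≤ olModular γ φ w x + olModular γ φ w y :=
  olModular_orthogonally_subadditive_general γ φ hconv h0 hpos w hwdec x y hdisj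
end

section
/- Let φ be an Orlicz function, φ* its complementary function, w a positive decreasing weight sequence, x ∈ λ_{φ,w} with α(x) < ∞, and η a sequence with p_{φ*,w}(δη) < ∞ for some δ > 0. Then for any v ≺ w with ∑ φ*(δ|η(k)|/v(k))v(k) < ∞, one has ∑_{k=1}^∞ |x(k)η(k)| ≤ δ⁻¹(∑ φ(|x(k)|)v(k) + ∑ φ*(δ|η(k)|/v(k))v(k)) < ∞. -/
open ENNReal Finset

/-- Decreasing rearrangement of a sequence, valued in `[0,∞]` (0-indexed):
`x*(k) = inf {λ : #{i : |x i| > λ} ≤ k}`. -/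
noncomputable def seqRearr (x : ℕ → ℝ) (k : ℕ) : ℝ≥0∞ :=
  sInf {l : ℝ≥0∞ | {i : ℕ | l < ENNReal.ofReal |x i|}.encard ≤ (k : ℕ∞)}

/-- The Orlicz-Lorentz sequence modular `α(x) = ∑ φ(x*(k)) w(k)`. -/
noncomputable def seqModular (φ : ℝ → ℝ) (w : ℕ → ℝ) (x : ℕ → ℝ) : ℝ≥0∞ :=
  ∑' k, phie φ (seqRearr x k) * ENNReal.ofReal (w k)

/-- The modular `p_{φ,w}(η) = inf { ∑ φ(|η k|/v k) v k : v ≺ w }` for sequences. -/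
noncomputable def seqP (φ : ℝ → ℝ) (w : ℕ → ℝ) (η : ℕ → ℝ) : ℝ≥0∞ :=
  sInf {c : ℝ≥0∞ | ∃ v : ℕ → ℝ, (∀ k, 0 < v k) ∧
    (∀ n : ℕ, ∑ k ∈ Finset.range n, seqRearr v k
      ≤ ∑ k ∈ Finset.range n, ENNReal.ofReal (w k)) ∧
    c = ∑' k, ENNReal.ofReal (φ (|η k| / v k) * v k)}



lemma seqRearr_antitone (x : ℕ → ℝ) : Antitone (seqRearr x) := by
  intro j j' h
  apply sInf_le_sInf
  intro l hl
  exact le_trans hl (by exact_mod_cast h : (j:ℕ∞) ≤ (j':ℕ∞))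

lemma le_seqRearr_of_card (x : ℕ → ℝ) (t : ℝ≥0∞) (u : Finset ℕ) (j : ℕ)
    (hu : ∀ k ∈ u, t ≤ ENNReal.ofReal |x k|) (hj : j < u.card) :
    t ≤ seqRearr x j := by
  apply le_sInf
  intro l hl
  by_contra hlt
  push_neg at hlt
  have hsub : (u : Set ℕ) ⊆ {i | l < ENNReal.ofReal |x i|} :=
    fun k hk => lt_of_lt_of_le hlt (hu k hk)
  have h1 : (u : Set ℕ).encard ≤ {i : ℕ | l < ENNReal.ofReal |x i|}.encard :=
    Set.encard_le_encard hsub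
  rw [Set.encard_coe_eq_coe_finsetCard] at h1
  have h2 : (u.card : ℕ∞) ≤ (j : ℕ∞) := le_trans h1 hl
  have : u.card ≤ j := by exact_mod_cast h2
  omega

lemma sum_le_rearr_sum (v : ℕ → ℝ) :
    ∀ (n : ℕ) (u : Finset ℕ), u.card = n →
      ∑ k ∈ u, ENNReal.ofReal (v k) ≤ ∑ j ∈ Finset.range n, seqRearr v j := by
  intro n
  induction n with
  | zero => intro u hu; simp [Finset.card_eq_zero.mp hu]
  | succ n ih =>
    intro u hu
    have hne : u.Nonempty := Finset.card_pos.mp (by omega)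
    obtain ⟨k0, hk0, hmin⟩ := Finset.exists_min_image u v hne
    have h1 : ENNReal.ofReal (v k0) ≤ seqRearr v n := by
      apply le_seqRearr_of_card v _ u n
      · intro k hk
        calc ENNReal.ofReal (v k0) ≤ ENNReal.ofReal (v k) := ENNReal.ofReal_le_ofReal (hmin k hk)
          _ ≤ ENNReal.ofReal |v k| := ENNReal.ofReal_le_ofReal (le_abs_self _)
      · omega
    have h2 := ih (u.erase k0) (by rw [Finset.card_erase_of_mem hk0, hu]; rfl)
    calc ∑ k ∈ u, ENNReal.ofReal (v k)
        = ENNReal.ofReal (v k0) + ∑ k ∈ u.erase k0, ENNReal.ofReal (v k) :=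
          (Finset.add_sum_erase u _ hk0).symm
      _ ≤ seqRearr v n + ∑ j ∈ Finset.range n, seqRearr v j := add_le_add h1 h2
      _ = ∑ j ∈ Finset.range (n+1), seqRearr v j := by
          rw [Finset.sum_range_succ, add_comm]

section phi
variable {φ : ℝ → ℝ}

lemma phi_nonneg (h0 : φ 0 = 0) (hpos : ∀ u : ℝ, 0 < u → 0 < φ u)
    {u : ℝ} (hu : 0 ≤ u) : 0 ≤ φ u := by
  rcases eq_or_lt_of_le hu with h | h
  · simp [← h, h0]
  · exact (hpos u h).le

lemma phi_mono (hconv : ConvexOn ℝ (Set.Ici 0) φ) (h0 : φ 0 = 0)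
    (hpos : ∀ u : ℝ, 0 < u → 0 < φ u)
    {u u' : ℝ} (hu : 0 ≤ u) (huu : u ≤ u') : φ u ≤ φ u' := by
  rcases eq_or_lt_of_le (hu.trans huu) with h | h
  · have h1 : u = 0 := le_antisymm (huu.trans h.symm.le) hu
    rw [h1, ← h]
  · set t := u / u' with ht
    have ht0 : 0 ≤ t := div_nonneg hu h.le
    have ht1 : t ≤ 1 := (div_le_one h).mpr huu
    have := hconv.2 (Set.mem_Ici.mpr le_rfl) (Set.mem_Ici.mpr h.le)
      (by linarith : (0:ℝ) ≤ 1 - t) ht0 (by ring)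
    simp only [smul_eq_mul, mul_zero, zero_add, h0, mul_zero] at this
    have hu'eq : t * u' = u := div_mul_cancel₀ u h.ne'
    rw [hu'eq] at this
    have hφ' : 0 ≤ φ u' := phi_nonneg h0 hpos h.le
    nlinarith

lemma phi_strictMono (hconv : ConvexOn ℝ (Set.Ici 0) φ) (h0 : φ 0 = 0)
    (hpos : ∀ u : ℝ, 0 < u → 0 < φ u)
    {u u' : ℝ} (hu : 0 ≤ u) (huu : u < u') : φ u < φ u' := by
  rcases eq_or_lt_of_le hu with h | h
  · rw [← h, h0]; exact hpos u' (by linarith)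
  · set t := u / u' with ht
    have hu' : 0 < u' := lt_trans h huu
    have ht0 : 0 ≤ t := div_nonneg h.le hu'.le
    have ht1 : t < 1 := (div_lt_one hu').mpr huu
    have := hconv.2 (Set.mem_Ici.mpr le_rfl) (Set.mem_Ici.mpr hu'.le)
      (by linarith : (0:ℝ) ≤ 1 - t) ht0 (by ring)
    simp only [smul_eq_mul, mul_zero, zero_add, h0, mul_zero] at this
    have hu'eq : t * u' = u := div_mul_cancel₀ u hu'.ne'
    rw [hu'eq] at this
    have hφ' : 0 < φ u' := hpos u' hu'
    nlinarith

end phi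



lemma sum_Ico_sub' (A : ℕ → ℝ) : ∀ N m, m ≤ N →
    ∑ i ∈ Finset.Ico m N, (A i - A (i+1)) = A m - A N := by
  intro N
  induction N with
  | zero => intro m hm; simp [Nat.le_zero.mp hm]
  | succ N ih =>
    intro m hm
    rcases Nat.lt_or_ge m (N+1) with h | h
    · have hmN : m ≤ N := Nat.lt_succ_iff.mp h
      rw [Finset.sum_Ico_succ_top hmN, ih m hmN]; ring
    · have : m = N+1 := le_antisymm hm h
      subst this; simp

open scoped Classical in
lemma hardy_core (a b c A : ℕ → ℝ) (s : Finset ℕ)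
    (hb : ∀ k, 0 ≤ b k) (hc : ∀ j, 0 ≤ c j)
    (hA : Antitone A) (hA0 : ∀ j, 0 ≤ A j)
    (haA : ∀ k ∈ s, a k ≤ A ((s.filter fun k' => a k ≤ a k').card - 1))
    (hbc : ∀ u : Finset ℕ, u ⊆ s → ∑ k ∈ u, b k ≤ ∑ j ∈ Finset.range u.card, c j) :
    ∑ k ∈ s, a k * b k ≤ ∑ j ∈ Finset.range s.card, A j * c j := by
  rcases Nat.eq_zero_or_pos s.card with hzero | hposn
  · simp [Finset.card_eq_zero.mp hzero]
  set n := s.card with hn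
  set ρ : ℕ → ℕ := fun k => (s.filter fun k' => a k ≤ a k').card - 1 with hρ
  have hρlt : ∀ k ∈ s, ρ k ≤ n - 1 := by
    intro k hk
    have : (s.filter fun k' => a k ≤ a k').card ≤ n := Finset.card_filter_le _ _
    simp only [hρ]; omega
  have hρcard : ∀ i, (s.filter fun k => ρ k ≤ i).card ≤ i + 1 := by
    intro i
    by_contra hcon
    push_neg at hcon
    obtain ⟨k0, hk0T, hk0min⟩ := Finset.exists_min_image (s.filter fun k => ρ k ≤ i) a
      (Finset.card_pos.mp (by omega))
    have hsub : (s.filter fun k => ρ k ≤ i) ⊆ s.filter fun k' => a k0 ≤ a k' := by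
      intro k hk
      simp only [Finset.mem_filter] at hk ⊢
      exact ⟨hk.1, hk0min k (Finset.mem_filter.mpr hk)⟩
    have hcard := Finset.card_le_card hsub
    have hk0ρ : ρ k0 ≤ i := (Finset.mem_filter.mp hk0T).2
    simp only [hρ] at hk0ρ
    omega
  set d : ℕ → ℝ := fun i => A i - A (i+1) with hd
  have hd0 : ∀ i, 0 ≤ d i := fun i => sub_nonneg.mpr (hA (Nat.le_succ i))
  have step1 : ∑ k ∈ s, a k * b k ≤ ∑ k ∈ s, A (ρ k) * b k :=
    Finset.sum_le_sum fun k hk => mul_le_mul_of_nonneg_right (haA k hk) (hb k)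
  have hIco : ∀ m : ℕ, Finset.Ico m (n-1) = (Finset.range (n-1)).filter (fun i => m ≤ i) := by
    intro m; ext i
    simp only [Finset.mem_Ico, Finset.mem_filter, Finset.mem_range]
    tauto
  have step2 : ∑ k ∈ s, A (ρ k) * b k
      = A (n-1) * ∑ k ∈ s, b k
        + ∑ i ∈ Finset.range (n-1), d i * ∑ k ∈ s.filter (fun k => ρ k ≤ i), b k := by
    calc ∑ k ∈ s, A (ρ k) * b k
        = ∑ k ∈ s, (A (n-1) * b k + ∑ i ∈ Finset.Ico (ρ k) (n-1), d i * b k) := by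
          apply Finset.sum_congr rfl
          intro k hk
          have : A (ρ k) = A (n-1) + ∑ i ∈ Finset.Ico (ρ k) (n-1), d i := by
            rw [sum_Ico_sub' A (n-1) (ρ k) (hρlt k hk)]; ring
          rw [this, add_mul, Finset.sum_mul]
      _ = A (n-1) * ∑ k ∈ s, b k + ∑ k ∈ s, ∑ i ∈ Finset.Ico (ρ k) (n-1), d i * b k := by
          rw [Finset.sum_add_distrib, Finset.mul_sum]
      _ = _ := by
          congr 1
          calc ∑ k ∈ s, ∑ i ∈ Finset.Ico (ρ k) (n-1), d i * b k
              = ∑ k ∈ s, ∑ i ∈ Finset.range (n-1), if ρ k ≤ i then d i * b k else 0 := by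
                apply Finset.sum_congr rfl
                intro k _
                rw [hIco (ρ k), Finset.sum_filter]
            _ = ∑ i ∈ Finset.range (n-1), ∑ k ∈ s, if ρ k ≤ i then d i * b k else 0 :=
                Finset.sum_comm
            _ = ∑ i ∈ Finset.range (n-1), d i * ∑ k ∈ s.filter (fun k => ρ k ≤ i), b k := by
                apply Finset.sum_congr rfl
                intro i _
                rw [Finset.mul_sum, Finset.sum_filter]
  have step3 : A (n-1) * ∑ k ∈ s, b k
        + ∑ i ∈ Finset.range (n-1), d i * ∑ k ∈ s.filter (fun k => ρ k ≤ i), b k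
      ≤ A (n-1) * ∑ j ∈ Finset.range n, c j
        + ∑ i ∈ Finset.range (n-1), d i * ∑ j ∈ Finset.range (i+1), c j := by
    apply add_le_add
    · exact mul_le_mul_of_nonneg_left (hbc s (le_refl s)) (hA0 _)
    · apply Finset.sum_le_sum
      intro i _
      apply mul_le_mul_of_nonneg_left _ (hd0 i)
      calc ∑ k ∈ s.filter (fun k => ρ k ≤ i), b k
          ≤ ∑ j ∈ Finset.range (s.filter (fun k => ρ k ≤ i)).card, c j :=
            hbc _ (Finset.filter_subset _ _)
        _ ≤ ∑ j ∈ Finset.range (i+1), c j := by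
            apply Finset.sum_le_sum_of_subset_of_nonneg
            · exact Finset.range_subset_range.mpr (hρcard i)
            · exact fun j _ _ => hc j
  have final : A (n-1) * ∑ j ∈ Finset.range n, c j
        + ∑ i ∈ Finset.range (n-1), d i * ∑ j ∈ Finset.range (i+1), c j
      = ∑ j ∈ Finset.range n, A j * c j := by
    have expand : ∀ j ∈ Finset.range n, A j * c j
        = A (n-1) * c j + (∑ i ∈ Finset.Ico j (n-1), d i) * c j := by
      intro j hj
      have hj' : j ≤ n - 1 := by have := Finset.mem_range.mp hj; omega
      rw [sum_Ico_sub' A (n-1) j hj']; ring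
    rw [Finset.sum_congr rfl expand, Finset.sum_add_distrib]
    congr 1
    · rw [Finset.mul_sum]
    · -- ∑_{i<n-1} d i * ∑_{j<i+1} c j = ∑_{j<n} (∑_{i∈Ico j (n-1)} d i) * c j
      have hIco2 : ∀ i ∈ Finset.range (n-1), Finset.range (i+1)
          = (Finset.range (n-1)).filter (fun j => j ≤ i) := by
        intro i hi
        have := Finset.mem_range.mp hi
        ext j
        simp only [Finset.mem_range, Finset.mem_filter]
        omega
      calc ∑ i ∈ Finset.range (n-1), d i * ∑ j ∈ Finset.range (i+1), c j
          = ∑ i ∈ Finset.range (n-1), ∑ j ∈ Finset.range (n-1),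
              if j ≤ i then d i * c j else 0 := by
            apply Finset.sum_congr rfl
            intro i hi
            rw [Finset.mul_sum, hIco2 i hi, Finset.sum_filter]
        _ = ∑ j ∈ Finset.range (n-1), ∑ i ∈ Finset.range (n-1),
              if j ≤ i then d i * c j else 0 := Finset.sum_comm
        _ = ∑ j ∈ Finset.range (n-1), (∑ i ∈ Finset.Ico j (n-1), d i) * c j := by
            apply Finset.sum_congr rfl
            intro j _
            rw [hIco j, Finset.sum_filter, Finset.sum_mul]
            exact Finset.sum_congr rfl fun i _ => by split <;> simp
        _ = ∑ j ∈ Finset.range n, (∑ i ∈ Finset.Ico j (n-1), d i) * c j := by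
            have hn1 : n = (n-1) + 1 := by omega
            rw [hn1, Finset.sum_range_succ]
            simp
  calc ∑ k ∈ s, a k * b k ≤ ∑ k ∈ s, A (ρ k) * b k := step1
    _ = _ := step2
    _ ≤ _ := step3
    _ = _ := final



section young
variable {φ φstar : ℝ → ℝ}

lemma young_bddAbove (h0 : φ 0 = 0) (hpos : ∀ u : ℝ, 0 < u → 0 < φ u)
    (hNinf : Filter.Tendsto (fun u => φ u / u) Filter.atTop Filter.atTop)
    (u : ℝ) (hu : 0 ≤ u) :
    BddAbove {z : ℝ | ∃ y : ℝ, 0 ≤ y ∧ z = u * y - φ y} := by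
  obtain ⟨Y, hY⟩ := Filter.eventually_atTop.mp (Filter.tendsto_atTop.mp hNinf (u + 1))
  refine ⟨u * max Y 1, ?_⟩
  rintro z ⟨y, hy0, rfl⟩
  rcases le_or_gt y (max Y 1) with h | h
  · have hφ : 0 ≤ φ y := by
      rcases eq_or_lt_of_le hy0 with h' | h'
      · simp [← h', h0]
      · exact (hpos y h').le
    nlinarith [mul_le_mul_of_nonneg_left h hu]
  · have hY' : Y ≤ y := le_of_lt (lt_of_le_of_lt (le_max_left Y 1) h)
    have hy1 : (1:ℝ) < y := lt_of_le_of_lt (le_max_right Y 1) h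
    have hypos : (0:ℝ) < y := by linarith
    have hdiv := hY y hY'
    have hφy : (u + 1) * y ≤ φ y := (le_div_iff₀ hypos).mp hdiv
    have : u * y - φ y ≤ -y := by nlinarith
    have hmax : (0:ℝ) ≤ u * max Y 1 := mul_nonneg hu (by positivity)
    linarith

lemma young_ineq (h0 : φ 0 = 0) (hpos : ∀ u : ℝ, 0 < u → 0 < φ u)
    (hNinf : Filter.Tendsto (fun u => φ u / u) Filter.atTop Filter.atTop)
    (hstar : ∀ u : ℝ, 0 ≤ u → φstar u = sSup {z : ℝ | ∃ y : ℝ, 0 ≤ y ∧ z = u * y - φ y})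
    (u y : ℝ) (hu : 0 ≤ u) (hy : 0 ≤ y) :
    u * y ≤ φ y + φstar u := by
  have hmem : u * y - φ y ∈ {z : ℝ | ∃ y : ℝ, 0 ≤ y ∧ z = u * y - φ y} := ⟨y, hy, rfl⟩
  have := le_csSup (young_bddAbove h0 hpos hNinf u hu) hmem
  rw [← hstar u hu] at this
  linarith

lemma phistar_nonneg (h0 : φ 0 = 0) (hpos : ∀ u : ℝ, 0 < u → 0 < φ u)
    (hNinf : Filter.Tendsto (fun u => φ u / u) Filter.atTop Filter.atTop)
    (hstar : ∀ u : ℝ, 0 ≤ u → φstar u = sSup {z : ℝ | ∃ y : ℝ, 0 ≤ y ∧ z = u * y - φ y})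
    (u : ℝ) (hu : 0 ≤ u) : 0 ≤ φstar u := by
  have := young_ineq h0 hpos hNinf hstar u 0 hu le_rfl
  rw [h0] at this
  linarith

end young


/-- The pairing estimate: for `x ∈ λ_{φ,w}`, `η` with `p_{φ*,w}(δη) < ∞` and any `v ≺ w`
with `∑ φ*(δ|η k|/v k) v k < ∞`, one has
`∑ |x k η k| ≤ δ⁻¹ (∑ φ(|x k|) v k + ∑ φ*(δ|η k|/v k) v k) < ∞`. -/
theorem sequence_pairing_finite (φ φstar : ℝ → ℝ)
    (hconv : ConvexOn ℝ (Set.Ici 0) φ) (h0 : φ 0 = 0)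
    (hpos : ∀ u : ℝ, 0 < u → 0 < φ u)
    (hN0 : Filter.Tendsto (fun u => φ u / u) (nhdsWithin 0 (Set.Ioi 0)) (nhds 0))
    (hNinf : Filter.Tendsto (fun u => φ u / u) Filter.atTop Filter.atTop)
    (hstar : ∀ u : ℝ, 0 ≤ u → φstar u = sSup {z : ℝ | ∃ y : ℝ, 0 ≤ y ∧ z = u * y - φ y})
    (w : ℕ → ℝ) (hwpos : ∀ k, 0 < w k) (hwdec : Antitone w)
    (x η : ℕ → ℝ) (hα : seqModular φ w x < ∞)
    (δ : ℝ) (hδ : 0 < δ) (hp : seqP φstar w (fun k => δ * η k) < ∞)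
    (v : ℕ → ℝ) (hv : ∀ k, 0 < v k)
    (hvw : ∀ n : ℕ, ∑ k ∈ Finset.range n, seqRearr v k
      ≤ ∑ k ∈ Finset.range n, ENNReal.ofReal (w k))
    (hB : (∑' k, ENNReal.ofReal (φstar (δ * |η k| / v k) * v k)) < ∞) :
    (∑' k, ENNReal.ofReal |x k * η k|)
      ≤ ENNReal.ofReal δ⁻¹ * ((∑' k, ENNReal.ofReal (φ |x k| * v k))
          + ∑' k, ENNReal.ofReal (φstar (δ * |η k| / v k) * v k)) ∧
    ENNReal.ofReal δ⁻¹ * ((∑' k, ENNReal.ofReal (φ |x k| * v k))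
        + ∑' k, ENNReal.ofReal (φstar (δ * |η k| / v k) * v k)) < ∞ := by
  classical
  -- no rearranged value is infinite
  have hfin : ∀ j, seqRearr x j ≠ ∞ := by
    intro j hjtop
    have h1 : phie φ (seqRearr x j) * ENNReal.ofReal (w j) = ∞ := by
      rw [hjtop]
      simp only [phie, eq_self_iff_true, if_true]
      exact ENNReal.top_mul (ENNReal.ofReal_pos.mpr (hwpos j)).ne'
    have h2 := ENNReal.le_tsum (f := fun k => phie φ (seqRearr x k) * ENNReal.ofReal (w k)) j
    rw [h1, top_le_iff] at h2
    rw [seqModular, h2] at hα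
    exact absurd hα (lt_irrefl _)
  set A : ℕ → ℝ := fun j => (phie φ (seqRearr x j)).toReal with hA_def
  have hAval : ∀ j, A j = φ (seqRearr x j).toReal := by
    intro j
    simp only [hA_def, phie, if_neg (hfin j)]
    exact ENNReal.toReal_ofReal (phi_nonneg h0 hpos ENNReal.toReal_nonneg)
  have hA0 : ∀ j, 0 ≤ A j := fun j => by
    rw [hAval j]; exact phi_nonneg h0 hpos ENNReal.toReal_nonneg
  have hA : Antitone A := by
    intro j j' hjj
    rw [hAval j, hAval j']
    exact phi_mono hconv h0 hpos ENNReal.toReal_nonneg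
      (ENNReal.toReal_mono (hfin j) (seqRearr_antitone x hjj))
  have hofRealA : ∀ j, ENNReal.ofReal (A j) = phie φ (seqRearr x j) := by
    intro j
    rw [hAval j]
    simp only [phie, if_neg (hfin j)]
  -- majorant property of b = v
  have hbc : ∀ u : Finset ℕ, ∑ k ∈ u, v k ≤ ∑ j ∈ Finset.range u.card, w j := by
    intro u
    have h1 : ENNReal.ofReal (∑ k ∈ u, v k) ≤ ENNReal.ofReal (∑ j ∈ Finset.range u.card, w j) := by
      rw [ENNReal.ofReal_sum_of_nonneg (fun k _ => (hv k).le),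
        ENNReal.ofReal_sum_of_nonneg (fun j _ => (hwpos j).le)]
      exact (sum_le_rearr_sum v u.card u rfl).trans (hvw u.card)
    exact (ENNReal.ofReal_le_ofReal_iff (Finset.sum_nonneg fun j _ => (hwpos j).le)).mp h1
  -- Hardy: partial sums of φ(|x k|) v k are dominated by the modular
  have hS1 : (∑' k, ENNReal.ofReal (φ |x k| * v k)) ≤ seqModular φ w x := by
    rw [ENNReal.tsum_eq_iSup_sum]
    apply iSup_le
    intro t
    obtain ⟨n, hn⟩ := Finset.exists_nat_subset_range t
    have hsub : ∑ k ∈ t, ENNReal.ofReal (φ |x k| * v k)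
        ≤ ∑ k ∈ Finset.range n, ENNReal.ofReal (φ |x k| * v k) :=
      Finset.sum_le_sum_of_subset hn
    refine hsub.trans ?_
    -- core inequality on range n
    have haA : ∀ k ∈ Finset.range n, φ |x k|
        ≤ A (((Finset.range n).filter fun k' => φ |x k| ≤ φ |x k'|).card - 1) := by
      intro k hk
      have hiff : ∀ k' : ℕ, (φ |x k| ≤ φ |x k'|) ↔ (|x k| ≤ |x k'|) := by
        intro k'
        constructor
        · intro h
          by_contra hcon
          push_neg at hcon
          exact absurd h (not_le.mpr (phi_strictMono hconv h0 hpos (abs_nonneg _) hcon))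
        · exact fun h => phi_mono hconv h0 hpos (abs_nonneg _) h
      have hfilter : ((Finset.range n).filter fun k' => φ |x k| ≤ φ |x k'|)
          = ((Finset.range n).filter fun k' => |x k| ≤ |x k'|) := by
        apply Finset.filter_congr
        intro k' _
        simp [hiff k']
      rw [hfilter]
      set u := ((Finset.range n).filter fun k' => |x k| ≤ |x k'|) with hu_def
      have hku : k ∈ u := Finset.mem_filter.mpr ⟨hk, le_rfl⟩
      have hcard : 1 ≤ u.card := Finset.card_pos.mpr ⟨k, hku⟩
      have hle : ENNReal.ofReal |x k| ≤ seqRearr x (u.card - 1) := by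
        apply le_seqRearr_of_card x _ u (u.card - 1)
        · intro k' hk'
          exact ENNReal.ofReal_le_ofReal (Finset.mem_filter.mp hk').2
        · omega
      have hxle : |x k| ≤ (seqRearr x (u.card - 1)).toReal := by
        have h' := ENNReal.toReal_mono (hfin _) hle
        rwa [ENNReal.toReal_ofReal (abs_nonneg _)] at h'
      rw [hAval]
      exact phi_mono hconv h0 hpos (abs_nonneg _) hxle
    have hcore := hardy_core (fun k => φ |x k|) v w A (Finset.range n)
      (fun k => (hv k).le) (fun j => (hwpos j).le) hA hA0 haA
      (fun u _ => hbc u)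
    rw [Finset.card_range] at hcore
    calc ∑ k ∈ Finset.range n, ENNReal.ofReal (φ |x k| * v k)
        = ENNReal.ofReal (∑ k ∈ Finset.range n, φ |x k| * v k) := by
          rw [ENNReal.ofReal_sum_of_nonneg]
          intro k _
          exact mul_nonneg (phi_nonneg h0 hpos (abs_nonneg _)) (hv k).le
      _ ≤ ENNReal.ofReal (∑ j ∈ Finset.range n, A j * w j) := ENNReal.ofReal_le_ofReal hcore
      _ = ∑ j ∈ Finset.range n, ENNReal.ofReal (A j * w j) := by
          rw [ENNReal.ofReal_sum_of_nonneg]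
          intro j _
          exact mul_nonneg (hA0 j) (hwpos j).le
      _ = ∑ j ∈ Finset.range n, phie φ (seqRearr x j) * ENNReal.ofReal (w j) := by
          apply Finset.sum_congr rfl
          intro j _
          rw [ENNReal.ofReal_mul (hA0 j), hofRealA j]
      _ ≤ seqModular φ w x := ENNReal.sum_le_tsum _
  -- pointwise Young estimate
  have hyoungk : ∀ k, ENNReal.ofReal |x k * η k|
      ≤ ENNReal.ofReal δ⁻¹ * (ENNReal.ofReal (φ |x k| * v k)
          + ENNReal.ofReal (φstar (δ * |η k| / v k) * v k)) := by
    intro k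
    have hvk := hv k
    have hu0 : 0 ≤ δ * |η k| / v k := by positivity
    have hy := young_ineq h0 hpos hNinf hstar (δ * |η k| / v k) |x k| hu0 (abs_nonneg _)
    have heq : |x k * η k| = δ⁻¹ * ((δ * |η k| / v k) * |x k| * v k) := by
      rw [abs_mul]
      field_simp
    rw [heq, ENNReal.ofReal_mul (by positivity)]
    apply mul_le_mul_right
    have hφ1 : 0 ≤ φ |x k| := phi_nonneg h0 hpos (abs_nonneg _)
    have hφ2 : 0 ≤ φstar (δ * |η k| / v k) := phistar_nonneg h0 hpos hNinf hstar _ hu0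
    calc ENNReal.ofReal ((δ * |η k| / v k) * |x k| * v k)
        ≤ ENNReal.ofReal ((φ |x k| + φstar (δ * |η k| / v k)) * v k) :=
          ENNReal.ofReal_le_ofReal (by nlinarith)
      _ = ENNReal.ofReal (φ |x k| * v k) + ENNReal.ofReal (φstar (δ * |η k| / v k) * v k) := by
          rw [add_mul, ENNReal.ofReal_add (by positivity) (by positivity)]
  constructor
  · calc (∑' k, ENNReal.ofReal |x k * η k|)
        ≤ ∑' k, ENNReal.ofReal δ⁻¹ * (ENNReal.ofReal (φ |x k| * v k)
            + ENNReal.ofReal (φstar (δ * |η k| / v k) * v k)) := ENNReal.tsum_le_tsum hyoungk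
      _ = ENNReal.ofReal δ⁻¹ * ∑' k, (ENNReal.ofReal (φ |x k| * v k)
            + ENNReal.ofReal (φstar (δ * |η k| / v k) * v k)) := ENNReal.tsum_mul_left
      _ = ENNReal.ofReal δ⁻¹ * ((∑' k, ENNReal.ofReal (φ |x k| * v k))
            + ∑' k, ENNReal.ofReal (φstar (δ * |η k| / v k) * v k)) := by
          rw [ENNReal.tsum_add]
  · have h1 : (∑' k, ENNReal.ofReal (φ |x k| * v k)) < ∞ := lt_of_le_of_lt hS1 hα
    exact ENNReal.mul_lt_top ENNReal.ofReal_lt_top (ENNReal.add_lt_top.mpr ⟨h1, hB⟩)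
end
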